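/- Let N ∈ ℕ. For every k ≥ 1 there exists a constant C_k > 0 (depending only on k and N) such that: for all L > 0 and all continuous f, g : [0,1] → ℝ^N with ∫_0^1 ‖f(t)‖ dt ≤ L and ∫_0^1 ‖g(t)‖ dt ≤ L, ( Σ_{I : |I| = k} (S^I(f) − S^I(g))² )^{1/2} ≤ C_k · L^{k-1} · ∫_0^1 ‖f(t) − g(t)‖ dt. (Stability/Lipschitz continuity of the level-k path signature with respect to the L¹ distance between derivatives, i.e. the metric d_ℝ on paths in a Lie group given by the 1-variation of their Euclidean representatives.) -/

import Mathlib

open MeasureTheory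

/-- The standard simplex of nondecreasing `k`-tuples with entries in `[0,1]`. -/
def simplex (k : ℕ) : Set (Fin k → ℝ) :=
  {t | (∀ j, t j ∈ Set.Icc (0:ℝ) 1) ∧ ∀ i j : Fin k, i ≤ j → t i ≤ t j}

/-- The signature coefficient of `f : [0,1] → ℝ^N` (Euclidean norm on `ℝ^N`) with
respect to a multi-index `I`. -/
noncomputable def sig {N : ℕ} (f : ℝ → EuclideanSpace ℝ (Fin N)) {k : ℕ}
    (I : Fin k → Fin N) : ℝ :=
  ∫ t in simplex k, ∏ j, f (t j) (I j)

/-! The two integrands differ by a telescoping sum: pointwise,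
`|∏ⱼ f_{Iⱼ}(tⱼ) - ∏ⱼ g_{Iⱼ}(tⱼ)| ≤ ∑ⱼ ‖f - g‖(tⱼ) ∏_{i ≠ j} (‖f‖ + ‖g‖)(tᵢ)`.
The majorant is nonnegative, so the integral over the simplex is at most the integral over the cube
`[0,1]^k`, where each summand splits by Fubini into `‖f - g‖₁ (‖f‖₁ + ‖g‖₁)^(k-1)`.
Hence each coefficient moves by at most `k (2L)^(k-1) ‖f - g‖₁`, and the `N^k` coefficients
together by `√(N^k)` times that. -/

lemma abs_prod_sub_prod_le {ι : Type*} [DecidableEq ι] (s : Finset ι) {a b δ ρ : ι → ℝ}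
    (hδ : ∀ i ∈ s, |a i - b i| ≤ δ i) (ha : ∀ i ∈ s, |a i| ≤ ρ i) (hb : ∀ i ∈ s, |b i| ≤ ρ i) :
    |∏ i ∈ s, a i - ∏ i ∈ s, b i| ≤ ∑ j ∈ s, δ j * ∏ i ∈ s.erase j, ρ i := by
  induction s using Finset.induction_on with
  | empty => simp
  | @insert j s hj ih =>
    simp only [Finset.forall_mem_insert] at hδ ha hb
    have hδj : 0 ≤ δ j := (abs_nonneg _).trans hδ.1
    have hρj : 0 ≤ ρ j := (abs_nonneg _).trans ha.1
    have hprod_b : |∏ i ∈ s, b i| ≤ ∏ i ∈ s, ρ i := by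
      rw [Finset.abs_prod]
      exact Finset.prod_le_prod (fun _ _ => abs_nonneg _) hb.2
    have hsum_insert : ∑ i ∈ s, δ i * ∏ l ∈ (insert j s).erase i, ρ l
        = ρ j * ∑ i ∈ s, δ i * ∏ l ∈ s.erase i, ρ l := by
      rw [Finset.mul_sum]
      refine Finset.sum_congr rfl fun i hi => ?_
      rw [Finset.erase_insert_of_ne (ne_of_mem_of_not_mem hi hj).symm,
        Finset.prod_insert fun h => hj (Finset.mem_of_mem_erase h)]
      ring
    rw [Finset.prod_insert hj, Finset.prod_insert hj, Finset.sum_insert hj,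
      Finset.erase_insert hj, hsum_insert]
    calc |a j * ∏ i ∈ s, a i - b j * ∏ i ∈ s, b i|
        = |(a j - b j) * ∏ i ∈ s, b i + a j * (∏ i ∈ s, a i - ∏ i ∈ s, b i)| := by ring_nf
      _ ≤ |a j - b j| * |∏ i ∈ s, b i| + |a j| * |∏ i ∈ s, a i - ∏ i ∈ s, b i| := by
        rw [← abs_mul, ← abs_mul]
        exact abs_add_le _ _
      _ ≤ δ j * ∏ i ∈ s, ρ i + ρ j * ∑ i ∈ s, δ i * ∏ l ∈ s.erase i, ρ l := by
        gcongr
        exacts [hδ.1, ha.1, ih hδ.2 ha.2 hb.2]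

lemma Finset.prod_apply_update_eq_mul_prod_erase {ι α β : Type*} [Fintype ι] [DecidableEq ι]
    [CommMonoid β] (F : ι → α → β) (a b : α) (j : ι) :
    ∏ i, F i (Function.update (fun _ => a) j b i) = F j b * ∏ i ∈ univ.erase j, F i a := by
  rw [← mul_prod_erase _ _ (mem_univ j), Function.update_self]
  congr 1
  exact prod_congr rfl fun i hi => by rw [Function.update_of_ne (ne_of_mem_erase hi)]

section Pi

variable {ι : Type*} [Fintype ι] {E : ι → Type*} [∀ i, MeasurableSpace (E i)]
  {μ : ∀ i, Measure (E i)} [∀ i, SigmaFinite (μ i)]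

lemma setIntegral_univ_pi_prod {𝕜 : Type*} [RCLike 𝕜] (s : ∀ i, Set (E i))
    (u : ∀ i, E i → 𝕜) :
    ∫ x in Set.univ.pi s, ∏ i, u i (x i) ∂Measure.pi μ = ∏ i, ∫ x in s i, u i x ∂μ i := by
  rw [Measure.restrict_pi_pi, integral_fintype_prod_eq_prod]

lemma integrableOn_univ_pi_prod {𝕜 : Type*} [NormedCommRing 𝕜] {s : ∀ i, Set (E i)}
    {u : ∀ i, E i → 𝕜} (hu : ∀ i, IntegrableOn (u i) (s i) (μ i)) :
    IntegrableOn (fun x => ∏ i, u i (x i)) (Set.univ.pi s) (Measure.pi μ) := by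
  rw [IntegrableOn, Measure.restrict_pi_pi]
  exact .fintype_prod_dep hu

end Pi

section UpdateMajorant

variable {ι E : Type*} [Fintype ι] [DecidableEq ι] [MeasurableSpace E] {μ : Measure E}
  [SigmaFinite μ] {s : Set E} {d w : E → ℝ}

lemma integrableOn_univ_pi_prod_update (hd : IntegrableOn d s μ) (hw : IntegrableOn w s μ)
    (j : ι) :
    IntegrableOn (fun x => ∏ i, Function.update (fun _ => w) j d i (x i))
      (Set.univ.pi fun _ => s) (Measure.pi fun _ => μ) :=
  integrableOn_univ_pi_prod fun i => by
    rcases eq_or_ne i j with rfl | hij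
    · simpa using hd
    · simpa [hij] using hw

lemma setIntegral_univ_pi_sum_prod_update (hd : IntegrableOn d s μ) (hw : IntegrableOn w s μ) :
    ∫ x in Set.univ.pi (fun _ : ι => s), ∑ j, ∏ i, Function.update (fun _ => w) j d i (x i)
        ∂Measure.pi (fun _ => μ)
      = (Fintype.card ι : ℝ) * (∫ x in s, d x ∂μ) * (∫ x in s, w x ∂μ) ^ (Fintype.card ι - 1) := by
  rw [integral_finsetSum _ fun j _ => integrableOn_univ_pi_prod_update hd hw j]
  have hterm (j : ι) :
      ∫ x in Set.univ.pi (fun _ : ι => s), ∏ i, Function.update (fun _ => w) j d i (x i)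
          ∂Measure.pi (fun _ => μ)
        = (∫ x in s, d x ∂μ) * (∫ x in s, w x ∂μ) ^ (Fintype.card ι - 1) := by
    rw [setIntegral_univ_pi_prod]
    refine (Finset.prod_apply_update_eq_mul_prod_erase
      (fun _ (φ : E → ℝ) => ∫ x in s, φ x ∂μ) w d j).trans ?_
    simp [Finset.card_erase_of_mem]
  simp [hterm, mul_assoc]

end UpdateMajorant

lemma abs_sig_sub_sig_le {N k : ℕ} {f g : ℝ → EuclideanSpace ℝ (Fin N)}
    (hf : IntegrableOn f (Set.Icc 0 1)) (hg : IntegrableOn g (Set.Icc 0 1)) (I : Fin k → Fin N) :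
    |sig f I - sig g I| ≤
      k * (∫ x in Set.Icc 0 1, ‖f x - g x‖) * (∫ x in Set.Icc 0 1, (‖f x‖ + ‖g x‖)) ^ (k - 1) := by
  classical
  set cube := Set.univ.pi fun _ : Fin k => Set.Icc (0:ℝ) 1
  set Φ : (Fin k → ℝ) → ℝ := fun t => ∑ j, ∏ i,
    Function.update (fun _ x => ‖f x‖ + ‖g x‖) j (fun x => ‖f x - g x‖) i (t i)
  have hsimplex : simplex k ⊆ cube := fun t ht i _ => ht.1 i
  have hcoord : ∀ {φ : ℝ → EuclideanSpace ℝ (Fin N)}, IntegrableOn φ (Set.Icc 0 1) →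
      IntegrableOn (fun t => ∏ j, φ (t j) (I j)) (simplex k) := fun {φ} hφ =>
    (integrableOn_univ_pi_prod (u := fun j x => φ x (I j)) fun j =>
      (EuclideanSpace.proj (𝕜 := ℝ) (I j)).integrable_comp hφ).mono_set hsimplex
  have hΦ : IntegrableOn Φ cube :=
    integrable_finsetSum _ fun j _ =>
      integrableOn_univ_pi_prod_update (hf.sub hg).norm (hf.norm.add hg.norm) j
  have habs_apply_le (x : EuclideanSpace ℝ (Fin N)) (i : Fin N) : |x i| ≤ ‖x‖ := by
    simpa using PiLp.norm_apply_le x i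
  have hpointwise (t : Fin k → ℝ) : |∏ j, f (t j) (I j) - ∏ j, g (t j) (I j)| ≤ Φ t :=
    (abs_prod_sub_prod_le _ (δ := fun j => ‖f (t j) - g (t j)‖)
      (ρ := fun i => ‖f (t i)‖ + ‖g (t i)‖)
      (fun j _ => by simpa using habs_apply_le (f (t j) - g (t j)) (I j))
      (fun j _ => (habs_apply_le _ _).trans (le_add_of_nonneg_right (norm_nonneg _)))
      (fun j _ => (habs_apply_le _ _).trans (le_add_of_nonneg_left (norm_nonneg _)))).trans_eq
    (Finset.sum_congr rfl fun j _ => (Finset.prod_apply_update_eq_mul_prod_erase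
      (fun i (φ : ℝ → ℝ) => φ (t i)) (fun x => ‖f x‖ + ‖g x‖) (fun x => ‖f x - g x‖) j).symm)
  calc |sig f I - sig g I|
      = |∫ t in simplex k, (∏ j, f (t j) (I j) - ∏ j, g (t j) (I j))| := by
        rw [sig, sig, integral_sub (hcoord hf) (hcoord hg)]
    _ ≤ ∫ t in simplex k, Φ t := abs_integral_le_integral_abs.trans
        (integral_mono ((hcoord hf).sub (hcoord hg)).abs (hΦ.mono_set hsimplex) hpointwise)
    _ ≤ ∫ t in cube, Φ t := setIntegral_mono_set hΦ
        (ae_of_all _ fun t => (abs_nonneg _).trans (hpointwise t)) hsimplex.eventuallyLE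
    _ = _ := by
      have hcube := setIntegral_univ_pi_sum_prod_update (ι := Fin k) (μ := volume)
        (s := Set.Icc 0 1) (d := fun x => ‖f x - g x‖) (w := fun x => ‖f x‖ + ‖g x‖)
        (hf.sub hg).norm (hf.norm.add hg.norm)
      rwa [Fintype.card_fin] at hcube

lemma Real.sqrt_sum_sq_le_of_abs_le {ι : Type*} [Fintype ι] {x : ι → ℝ} {M : ℝ} (hM : 0 ≤ M)
    (hx : ∀ i, |x i| ≤ M) :
    √(∑ i, x i ^ 2) ≤ √(Fintype.card ι) * M :=
  calc √(∑ i, x i ^ 2) ≤ √(∑ _i : ι, M ^ 2) :=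
        Real.sqrt_le_sqrt <| Finset.sum_le_sum fun i _ =>
          sq_le_sq.mpr ((hx i).trans (le_abs_self M))
    _ = √(Fintype.card ι) * M := by
        rw [Finset.sum_const, Finset.card_univ, nsmul_eq_mul, Real.sqrt_mul (Nat.cast_nonneg _),
          Real.sqrt_sq hM]

theorem signature_stability_general (N : ℕ) (k : ℕ) :
    ∃ C : ℝ, 0 < C ∧
      ∀ L : ℝ, 0 < L →
        ∀ f g : ℝ → EuclideanSpace ℝ (Fin N),
          ContinuousOn f (Set.Icc 0 1) → ContinuousOn g (Set.Icc 0 1) →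
          (∫ t in (0:ℝ)..1, ‖f t‖) ≤ L → (∫ t in (0:ℝ)..1, ‖g t‖) ≤ L →
          Real.sqrt (∑ I : Fin k → Fin N, (sig f I - sig g I) ^ 2) ≤
            C * L ^ (k - 1) * ∫ t in (0:ℝ)..1, ‖f t - g t‖ := by
  refine ⟨√(Fintype.card (Fin k → Fin N)) * k * 2 ^ (k - 1) + 1, by positivity, ?_⟩
  intro L _ f g hf hg hfL hgL
  have hIcc (u : ℝ → ℝ) : ∫ x in Set.Icc (0:ℝ) 1, u x = ∫ x in (0:ℝ)..1, u x := by
    rw [intervalIntegral.integral_of_le zero_le_one, integral_Icc_eq_integral_Ioc]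
  set D := ∫ t in (0:ℝ)..1, ‖f t - g t‖
  have hD : 0 ≤ D := intervalIntegral.integral_nonneg zero_le_one fun _ _ => norm_nonneg _
  have hW : ∫ x in Set.Icc (0:ℝ) 1, (‖f x‖ + ‖g x‖) ≤ 2 * L := by
    rw [integral_add hf.norm.integrableOn_Icc hg.norm.integrableOn_Icc, hIcc, hIcc]
    linarith
  have hW0 : 0 ≤ ∫ x in Set.Icc (0:ℝ) 1, (‖f x‖ + ‖g x‖) :=
    setIntegral_nonneg measurableSet_Icc fun _ _ => by positivity
  have hsig (I : Fin k → Fin N) : |sig f I - sig g I| ≤ k * D * (2 * L) ^ (k - 1) := by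
    refine (abs_sig_sub_sig_le hf.integrableOn_Icc hg.integrableOn_Icc I).trans ?_
    rw [hIcc]
    gcongr
  calc √(∑ I : Fin k → Fin N, (sig f I - sig g I) ^ 2)
      ≤ √(Fintype.card (Fin k → Fin N)) * (k * D * (2 * L) ^ (k - 1)) :=
        Real.sqrt_sum_sq_le_of_abs_le (by positivity) hsig
    _ = √(Fintype.card (Fin k → Fin N)) * k * 2 ^ (k - 1) * L ^ (k - 1) * D := by ring
    _ ≤ _ := by gcongr; exact le_add_of_nonneg_right zero_le_one

/-- **Stability (Lipschitz continuity) of the level-`k` path signature** with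
respect to the `L¹` distance between derivatives: for every `k ≥ 1` there is a
constant `C_k > 0` (depending only on `k` and `N`) such that for all `L > 0` and
all continuous `f, g` with 1-variation at most `L`,
`‖π_k(S(f) − S(g))‖ ≤ C_k L^{k-1} ∫_0^1 ‖f − g‖`. -/
theorem signature_stability (N : ℕ) (k : ℕ) (hk : 1 ≤ k) :
    ∃ C : ℝ, 0 < C ∧
      ∀ L : ℝ, 0 < L →
        ∀ f g : ℝ → EuclideanSpace ℝ (Fin N),
          ContinuousOn f (Set.Icc 0 1) → ContinuousOn g (Set.Icc 0 1) →
          (∫ t in (0:ℝ)..1, ‖f t‖) ≤ L → (∫ t in (0:ℝ)..1, ‖g t‖) ≤ L →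
          Real.sqrt (∑ I : Fin k → Fin N, (sig f I - sig g I) ^ 2) ≤
            C * L ^ (k - 1) * ∫ t in (0:ℝ)..1, ‖f t - g t‖ :=
  signature_stability_general N k
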